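/- arXiv:1605.04679 — 2 statements merged into one kernel-verified Lean document; each statement's English description precedes it below -/
import Mathlib

section
/- Let G = (V,E) be a finite simple graph that is completely leaf-removable. Then the minimum vertex cover number equals the maximum matching number: τ(G) = ν(G). (In other words, on completely leaf-removable graphs the primal integer program and its dual integer program have equal optimal values.) -/
open Finset

variable {V : Type*} [Fintype V] [DecidableEq V]

/-- A fractional vertex cover of `G`. -/
def IsFracCover (G : SimpleGraph V) (x : V → ℝ) : Prop :=
  (∀ v, 0 ≤ x v ∧ x v ≤ 1) ∧ ∀ ⦃u v⦄, G.Adj u v → 1 ≤ x u + x v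

/-- The optimum value of the LP relaxation of minimum vertex cover. -/
noncomputable def LPopt (G : SimpleGraph V) : ℝ :=
  sInf {s : ℝ | ∃ x : V → ℝ, IsFracCover G x ∧ s = ∑ v, x v}

/-- `C` is a vertex cover of `G`. -/
def IsVC (G : SimpleGraph V) (C : Finset V) : Prop :=
  ∀ ⦃u v⦄, G.Adj u v → u ∈ C ∨ v ∈ C

/-- The vertex cover number `τ(G)`. -/
noncomputable def tau (G : SimpleGraph V) : ℕ :=
  sInf {n : ℕ | ∃ C : Finset V, IsVC G C ∧ C.card = n}

/-- `M` is a set of pairwise vertex-disjoint edges of `G`. -/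
def IsMatchingSet (G : SimpleGraph V) (M : Finset (Sym2 V)) : Prop :=
  (∀ e ∈ M, e ∈ G.edgeSet) ∧
  ∀ e ∈ M, ∀ f ∈ M, e ≠ f → ∀ v : V, ¬(v ∈ e ∧ v ∈ f)

/-- The matching number `ν(G)`. -/
noncomputable def nu (G : SimpleGraph V) : ℕ :=
  sSup {n : ℕ | ∃ M : Finset (Sym2 V), IsMatchingSet G M ∧ M.card = n}

/-- The graph obtained from `G` by deleting vertex `v` together with all
edges incident to `v` (the vertex set is kept, `v` becomes isolated). -/
def delVert {V : Type*} (G : SimpleGraph V) (v : V) : SimpleGraph V where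
  Adj a b := G.Adj a b ∧ a ≠ v ∧ b ≠ v
  symm := ⟨fun a b h => ⟨h.1.symm, h.2.2, h.2.1⟩⟩
  loopless := ⟨fun a h => G.irrefl h.1⟩

/-- `G` is completely leaf-removable: either `G` has no edges, or there is a
vertex `w` of degree one with unique neighbour `v` such that deleting `v`
(and all edges incident to it) yields a completely leaf-removable graph. -/
inductive CompletelyLeafRemovable {V : Type*} : SimpleGraph V → Prop
  | empty (G : SimpleGraph V) (h : ∀ a b : V, ¬ G.Adj a b) : CompletelyLeafRemovable G
  | step (G : SimpleGraph V) (w v : V) (hadj : G.Adj w v)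
      (huniq : ∀ u : V, G.Adj w u → u = v)
      (h : CompletelyLeafRemovable (delVert G v)) : CompletelyLeafRemovable G

/-- A fractional matching of `G`, encoded as a function on `Sym2 V` vanishing
off the edge set of `G`. -/
def IsFracMatching (G : SimpleGraph V) (y : Sym2 V → ℝ) : Prop :=
  (∀ e ∈ G.edgeSet, 0 ≤ y e) ∧ (∀ e, e ∉ G.edgeSet → y e = 0) ∧
  ∀ v : V, ∑ e ∈ Finset.univ.filter (fun e : Sym2 V => v ∈ e), y e ≤ 1

/-- The value of a fractional matching. -/
noncomputable def FMvalue (y : Sym2 V → ℝ) : ℝ := ∑ e : Sym2 V, y e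

/-!
Every matching edge needs its own vertex of a cover, so `ν ≤ τ` for every graph. Conversely, if
`w` is a leaf with neighbour `v`, a minimum cover of `G - v` together with `v` covers `G`, while a
maximum matching of `G - v` avoids both `v` and `w` and so extends by the edge `wv`. Hence
`τ(G) ≤ τ(G - v) + 1 = ν(G - v) + 1 ≤ ν(G)`, by induction along the leaf removals.
-/

section

variable {V : Type*} {G H : SimpleGraph V}

lemma IsMatchingSet.card_le_card_of_isVC {M : Finset (Sym2 V)} {C : Finset V}
    (hM : IsMatchingSet G M) (hC : IsVC G C) : M.card ≤ C.card := by
  refine Finset.card_le_card_of_forall_subsingleton (fun e u => u ∈ e) (fun e he => ?_)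
    fun u _ e he f hf => by_contra fun hef => hM.2 e he.1 f hf.1 hef u ⟨he.2, hf.2⟩
  induction e using Sym2.ind with
  | _ a b =>
    rcases hC (G.mem_edgeSet.mp (hM.1 _ he)) with ha | hb
    · exact ⟨a, ha, Sym2.mem_mk_left a b⟩
    · exact ⟨b, hb, Sym2.mem_mk_right a b⟩

lemma IsMatchingSet.mono (hGH : G ≤ H) {M : Finset (Sym2 V)} (hM : IsMatchingSet G M) :
    IsMatchingSet H M :=
  ⟨fun e he => SimpleGraph.edgeSet_mono hGH (hM.1 e he), hM.2⟩

lemma IsMatchingSet.insert [DecidableEq V] {M : Finset (Sym2 V)} (hM : IsMatchingSet G M)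
    {e : Sym2 V} (he : e ∈ G.edgeSet) (hdisj : ∀ f ∈ M, ∀ u ∈ e, u ∉ f) :
    IsMatchingSet G (insert e M) := by
  refine ⟨fun f hf => ?_, fun f hf g hg hfg u ⟨huf, hug⟩ => ?_⟩
  · rcases Finset.mem_insert.mp hf with rfl | hf
    exacts [he, hM.1 f hf]
  · rcases Finset.mem_insert.mp hf with rfl | hfM <;> rcases Finset.mem_insert.mp hg with rfl | hgM
    · exact hfg rfl
    · exact hdisj g hgM u huf hug
    · exact hdisj f hfM u hug huf
    · exact hM.2 f hfM g hgM hfg u ⟨huf, hug⟩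

lemma tau_le_card {C : Finset V} (hC : IsVC G C) : tau G ≤ C.card :=
  Nat.sInf_le ⟨C, hC, rfl⟩

lemma exists_isVC_card_eq_tau [Fintype V] (G : SimpleGraph V) :
    ∃ C : Finset V, IsVC G C ∧ C.card = tau G :=
  Nat.sInf_mem (s := {n | ∃ C, IsVC G C ∧ C.card = n})
    ⟨_, Finset.univ, fun u _ _ => Or.inl (Finset.mem_univ u), rfl⟩

lemma nu_set_bddAbove [Fintype V] (G : SimpleGraph V) :
    BddAbove {n : ℕ | ∃ M : Finset (Sym2 V), IsMatchingSet G M ∧ M.card = n} :=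
  ⟨Fintype.card (Sym2 V), by rintro _ ⟨M, -, rfl⟩; exact M.card_le_univ⟩

lemma card_le_nu [Fintype V] {M : Finset (Sym2 V)} (hM : IsMatchingSet G M) : M.card ≤ nu G :=
  le_csSup (nu_set_bddAbove G) ⟨M, hM, rfl⟩

lemma exists_isMatchingSet_card_eq_nu [Fintype V] (G : SimpleGraph V) :
    ∃ M : Finset (Sym2 V), IsMatchingSet G M ∧ M.card = nu G :=
  Nat.sSup_mem (s := {n | ∃ M, IsMatchingSet G M ∧ M.card = n})
    ⟨0, ∅, ⟨by simp, by simp⟩, rfl⟩ (nu_set_bddAbove G)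

lemma nu_le_tau [Fintype V] (G : SimpleGraph V) : nu G ≤ tau G := by
  obtain ⟨M, hM, hMcard⟩ := exists_isMatchingSet_card_eq_nu G
  obtain ⟨C, hC, hCcard⟩ := exists_isVC_card_eq_tau G
  exact hMcard ▸ hCcard ▸ hM.card_le_card_of_isVC hC

lemma tau_eq_zero_of_forall_not_adj (hG : ∀ a b : V, ¬ G.Adj a b) : tau G = 0 :=
  Nat.le_zero.mp (tau_le_card (C := ∅) fun a b hab => (hG a b hab).elim)

lemma delVert_le (G : SimpleGraph V) (v : V) : delVert G v ≤ G :=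
  fun _ _ hab => hab.1

lemma tau_le_tau_delVert_add_one [Fintype V] [DecidableEq V] (G : SimpleGraph V) (v : V) :
    tau G ≤ tau (delVert G v) + 1 := by
  obtain ⟨C, hC, hCcard⟩ := exists_isVC_card_eq_tau (delVert G v)
  have hcov : IsVC G (insert v C) := by
    intro a b hab
    by_cases ha : a = v
    · exact Or.inl (ha ▸ Finset.mem_insert_self v C)
    by_cases hb : b = v
    · exact Or.inr (hb ▸ Finset.mem_insert_self v C)
    exact (hC ⟨hab, ha, hb⟩).imp Finset.mem_insert_of_mem Finset.mem_insert_of_mem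
  calc tau G ≤ (insert v C).card := tau_le_card hcov
    _ ≤ C.card + 1 := Finset.card_insert_le v C
    _ = tau (delVert G v) + 1 := by rw [hCcard]

lemma not_mem_of_mem_edgeSet_delVert {v w : V} (hw : ∀ u, G.Adj w u → u = v) {f : Sym2 V}
    (hf : f ∈ (delVert G v).edgeSet) : v ∉ f ∧ w ∉ f := by
  induction f using Sym2.ind with
  | _ a b =>
    obtain ⟨hab, ha, hb⟩ := (delVert G v).mem_edgeSet.mp hf
    simp only [Sym2.mem_iff, not_or]
    refine ⟨⟨Ne.symm ha, Ne.symm hb⟩, ?_, ?_⟩ <;> rintro rfl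
    exacts [hb (hw b hab), ha (hw a hab.symm)]

lemma nu_delVert_add_one_le [Fintype V] [DecidableEq V] {v w : V} (hwv : G.Adj w v)
    (hw : ∀ u, G.Adj w u → u = v) : nu (delVert G v) + 1 ≤ nu G := by
  obtain ⟨M, hM, hMcard⟩ := exists_isMatchingSet_card_eq_nu (delVert G v)
  have hdisj : ∀ f ∈ M, ∀ u ∈ s(w, v), u ∉ f := by
    intro f hf u hu
    have := not_mem_of_mem_edgeSet_delVert hw (hM.1 f hf)
    rcases Sym2.mem_iff.mp hu with rfl | rfl
    exacts [this.2, this.1]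
  have hnotin : s(w, v) ∉ M := fun h =>
    hdisj _ h v (Sym2.mem_mk_right w v) (Sym2.mem_mk_right w v)
  calc nu (delVert G v) + 1 = (insert s(w, v) M).card := by
        rw [Finset.card_insert_of_notMem hnotin, hMcard]
    _ ≤ nu G := card_le_nu ((hM.mono (delVert_le G v)).insert hwv hdisj)
end

/-- If `G` is completely leaf-removable then the minimum vertex cover
number equals the maximum matching number. -/
theorem tau_eq_nu_of_completelyLeafRemovable (G : SimpleGraph V)
    (h : CompletelyLeafRemovable G) :
    tau G = nu G := by
  refine le_antisymm ?_ (nu_le_tau G)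
  induction h with
  | empty G hG => simp [tau_eq_zero_of_forall_not_adj hG]
  | step G w v hwv hw _ ih =>
    calc tau G ≤ tau (delVert G v) + 1 := tau_le_tau_delVert_add_one G v
      _ ≤ nu (delVert G v) + 1 := Nat.add_le_add_right ih 1
      _ ≤ nu G := nu_delVert_add_one_le hwv hw
end

section
/- (Half-integrality of LP-relaxed vertex cover, Nemhauser–Trotter.) Let G = (V,E) be a finite simple graph. Then there exists a fractional vertex cover x of G attaining the LP optimum, i.e. ∑_{v∈V} x(v) = LP(G), such that x(v) ∈ {0, 1/2, 1} for every vertex v. -/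
open Finset

variable {V : Type*} [Fintype V] [DecidableEq V]

/-!
Any fractional cover `x` can be rounded to a half-integral one of no larger weight. Scaling
the distance from `1/2` of every coordinate other than `0` and `1` by a factor `t ≥ 0` keeps
`x` a fractional cover as long as no coordinate leaves `[0, 1]`, and changes its weight by
`(t - 1) * s` for a fixed slope `s`. If `s ≥ 0`, take `t = 0`: every such coordinate becomes
`1/2`. If `s < 0`, take the largest admissible `t ≥ 1`: a coordinate farthest from `1/2`
becomes `0` or `1`. Either way fewer coordinates lie outside `{0, 1/2, 1}`, so iterating gives
a half-integral cover. There are finitely many half-integral covers, and the lightest one is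
therefore an optimal fractional cover.
-/

section

variable {V : Type*} {G : SimpleGraph V} {x : V → ℝ}

abbrev halfIntegralValues : Set ℝ := {0, 1 / 2, 1}

noncomputable def fracDev (x : V → ℝ) (v : V) : ℝ :=
  if x v = 0 ∨ x v = 1 then 0 else x v - 1 / 2

/-- On coordinates other than `0` and `1` this is `1/2 + t * (x v - 1/2)`; the coordinates
`0` and `1` are kept. -/
noncomputable def rescale (x : V → ℝ) (t : ℝ) (v : V) : ℝ :=
  x v + (t - 1) * fracDev x v

lemma rescale_apply_eq_or (x : V → ℝ) (t : ℝ) (v : V) :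
    (x v = 0 ∨ x v = 1) ∧ rescale x t v = x v ∨
      (x v ≠ 0 ∧ x v ≠ 1) ∧ fracDev x v = x v - 1 / 2 ∧
        rescale x t v = 1 / 2 + t * (x v - 1 / 2) := by
  unfold rescale fracDev
  split_ifs with h
  · exact Or.inl ⟨h, by ring⟩
  · rw [not_or] at h
    exact Or.inr ⟨h, rfl, by ring⟩

lemma isFracCover_rescale {t : ℝ} (hx : IsFracCover G x) (ht : 0 ≤ t)
    (hbound : ∀ v, t * |fracDev x v| ≤ 1 / 2) : IsFracCover G (rescale x t) := by
  have hcases : ∀ v, (x v = 0 ∨ x v = 1) ∧ rescale x t v = x v ∨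
      0 < x v ∧ x v < 1 ∧ |t * (x v - 1 / 2)| ≤ 1 / 2 ∧
        rescale x t v = 1 / 2 + t * (x v - 1 / 2) := by
    intro v
    rcases rescale_apply_eq_or x t v with h | ⟨⟨h0, h1⟩, hd, h⟩
    · exact Or.inl h
    · have := hbound v
      rw [hd] at this
      exact Or.inr ⟨lt_of_le_of_ne (hx.1 v).1 (Ne.symm h0), lt_of_le_of_ne (hx.1 v).2 h1,
        by rwa [abs_mul, abs_of_nonneg ht], h⟩
  refine ⟨fun v => ?_, fun u v huv => ?_⟩
  · rcases hcases v with ⟨-, h⟩ | ⟨-, -, hb, h⟩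
    · exact h ▸ hx.1 v
    · rw [h]
      constructor <;> linarith [abs_le.mp hb]
  · have hsum := hx.2 huv
    rcases hcases u with ⟨hu, eu⟩ | ⟨hu0, hu1, hbu, eu⟩ <;>
      rcases hcases v with ⟨hv, ev⟩ | ⟨hv0, hv1, hbv, ev⟩ <;> rw [eu, ev]
    · exact hsum
    · -- `x u = 0` is impossible: it would force `x v ≥ 1`
      rcases hu with hu | hu <;> [linarith; linarith [abs_le.mp hbv]]
    · rcases hv with hv | hv <;> [linarith; linarith [abs_le.mp hbu]]
    · linarith [mul_nonneg ht (sub_nonneg.mpr hsum)]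

lemma fracDev_eq_zero_iff {v : V} : fracDev x v = 0 ↔ x v ∈ halfIntegralValues := by
  simp only [fracDev, halfIntegralValues, Set.mem_insert_iff, Set.mem_singleton_iff]
  split_ifs with h
  · tauto
  · rw [not_or] at h
    simp [h.1, h.2, sub_eq_zero]

lemma rescale_of_mem_halfIntegralValues {v : V} (t : ℝ) (h : x v ∈ halfIntegralValues) :
    rescale x t v = x v := by
  simp [rescale, fracDev_eq_zero_iff.mpr h]

lemma abs_fracDev_le (hx : IsFracCover G x) (v : V) : |fracDev x v| ≤ 1 / 2 := by
  unfold fracDev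
  split_ifs
  · norm_num
  · rw [abs_le]
    constructor <;> linarith [hx.1 v]

lemma rescale_zero_mem_halfIntegralValues (v : V) : rescale x 0 v ∈ halfIntegralValues := by
  rcases rescale_apply_eq_or x 0 v with ⟨h, e⟩ | ⟨-, -, e⟩ <;> rw [e]
  · rcases h with h | h <;> simp [h]
  · simp

lemma rescale_inv_mem_halfIntegralValues {v : V} (hv : fracDev x v ≠ 0) :
    rescale x (1 / (2 * |fracDev x v|)) v ∈ halfIntegralValues := by
  rcases rescale_apply_eq_or x (1 / (2 * |fracDev x v|)) v with ⟨h, e⟩ | ⟨-, hd, e⟩ <;> rw [e]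
  · rcases h with h | h <;> simp [h]
  · rw [hd] at hv ⊢
    simp only [halfIntegralValues, Set.mem_insert_iff, Set.mem_singleton_iff]
    generalize x v - 1 / 2 = d at hv ⊢
    rcases hv.lt_or_gt with h | h
    · rw [abs_of_neg h]; left; field_simp; ring
    · rw [abs_of_pos h]; right; right; field_simp; ring

variable [Fintype V]

lemma sum_rescale (x : V → ℝ) (t : ℝ) :
    ∑ v, rescale x t v = ∑ v, x v + (t - 1) * ∑ v, fracDev x v := by
  simp [rescale, sum_add_distrib, mul_sum]

open scoped Classical in
noncomputable def nonHalfIntegralSet (x : V → ℝ) : Finset V :=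
  univ.filter fun v => x v ∉ halfIntegralValues

lemma mem_nonHalfIntegralSet {v : V} : v ∈ nonHalfIntegralSet x ↔ x v ∉ halfIntegralValues := by
  simp [nonHalfIntegralSet]

lemma nonHalfIntegralSet_rescale_subset (t : ℝ) :
    nonHalfIntegralSet (rescale x t) ⊆ nonHalfIntegralSet x := by
  intro v
  simp only [mem_nonHalfIntegralSet]
  exact mt fun h => (rescale_of_mem_halfIntegralValues t h).symm ▸ h

lemma exists_isFracCover_card_nonHalfIntegralSet_lt (hx : IsFracCover G x)
    (hne : (nonHalfIntegralSet x).Nonempty) :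
    ∃ y, IsFracCover G y ∧ #(nonHalfIntegralSet y) < #(nonHalfIntegralSet x) ∧
      ∑ v, y v ≤ ∑ v, x v := by
  by_cases hslope : 0 ≤ ∑ v, fracDev x v
  · refine ⟨rescale x 0, isFracCover_rescale hx le_rfl (by simp), ?_, ?_⟩
    · have hempty : nonHalfIntegralSet (rescale x 0) = ∅ := eq_empty_of_forall_notMem
        fun v hv => mem_nonHalfIntegralSet.mp hv (rescale_zero_mem_halfIntegralValues v)
      rw [hempty]
      exact hne.card_pos
    · rw [sum_rescale]
      linarith
  · obtain ⟨w, hw⟩ := hne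
    have : Nonempty V := ⟨w⟩
    obtain ⟨u, -, hu⟩ := exists_max_image univ (fun v => |fracDev x v|) univ_nonempty
    have hw0 : fracDev x w ≠ 0 := mt fracDev_eq_zero_iff.mp (mem_nonHalfIntegralSet.mp hw)
    have hu0 : fracDev x u ≠ 0 :=
      abs_pos.mp ((abs_pos.mpr hw0).trans_le (hu w (mem_univ w)))
    set t := 1 / (2 * |fracDev x u|) with ht
    have ht1 : 1 ≤ t := by
      rw [ht, le_div_iff₀ (by positivity)]
      linarith [abs_fracDev_le hx u]
    refine ⟨rescale x t, isFracCover_rescale hx (by linarith) fun v => ?_, card_lt_card ?_, ?_⟩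
    · calc t * |fracDev x v| ≤ t * |fracDev x u| :=
            mul_le_mul_of_nonneg_left (hu v (mem_univ v)) (by positivity)
        _ = 1 / 2 := by rw [ht]; field_simp
    · refine (ssubset_iff_of_subset (nonHalfIntegralSet_rescale_subset t)).mpr ⟨u, ?_, ?_⟩
      · exact mem_nonHalfIntegralSet.mpr (mt fracDev_eq_zero_iff.mpr hu0)
      · exact fun h => mem_nonHalfIntegralSet.mp h (rescale_inv_mem_halfIntegralValues hu0)
    · rw [sum_rescale]
      linarith [mul_nonpos_of_nonneg_of_nonpos (sub_nonneg.mpr ht1) (not_le.mp hslope).le]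

lemma exists_halfIntegral_isFracCover_sum_le (hx : IsFracCover G x) :
    ∃ y, IsFracCover G y ∧ (∀ v, y v ∈ halfIntegralValues) ∧ ∑ v, y v ≤ ∑ v, x v := by
  induction h : #(nonHalfIntegralSet x) using Nat.strong_induction_on generalizing x with
  | _ n ih =>
    rcases (nonHalfIntegralSet x).eq_empty_or_nonempty with hempty | hne
    · refine ⟨x, hx, fun v => ?_, le_rfl⟩
      by_contra hv
      simpa [hempty] using mem_nonHalfIntegralSet.mpr hv
    · obtain ⟨y, hy, hlt, hle⟩ := exists_isFracCover_card_nonHalfIntegralSet_lt hx hne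
      obtain ⟨z, hz, hzhalf, hzle⟩ := ih _ (h ▸ hlt) hy rfl
      exact ⟨z, hz, hzhalf, hzle.trans hle⟩

end

/-- **half-integrality, Nemhauser–Trotter.** Some optimal fractional
vertex cover takes only the values `0`, `1/2`, `1`. -/
theorem half_integrality (G : SimpleGraph V) :
    ∃ x : V → ℝ, IsFracCover G x ∧ ∑ v, x v = LPopt G ∧
      ∀ v : V, x v = 0 ∨ x v = 1 / 2 ∨ x v = 1 := by
  set H := {x : V → ℝ | IsFracCover G x ∧ ∀ v, x v ∈ halfIntegralValues}
  have hfin : H.Finite :=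
    (Set.Finite.pi' fun _ => Set.toFinite halfIntegralValues).subset fun _ hx => hx.2
  have hone : (1 : V → ℝ) ∈ H := ⟨⟨fun _ => by norm_num, fun _ _ _ => by norm_num⟩, by simp⟩
  obtain ⟨x₀, ⟨hx₀, hhalf⟩, hmin⟩ := Set.exists_min_image H (fun x => ∑ v, x v) hfin ⟨1, hone⟩
  have hleast : IsLeast {s | ∃ x : V → ℝ, IsFracCover G x ∧ s = ∑ v, x v} (∑ v, x₀ v) := by
    refine ⟨⟨x₀, hx₀, rfl⟩, ?_⟩
    rintro _ ⟨x, hx, rfl⟩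
    obtain ⟨y, hy, hyhalf, hyx⟩ := exists_halfIntegral_isFracCover_sum_le hx
    exact (hmin y ⟨hy, hyhalf⟩).trans hyx
  exact ⟨x₀, hx₀, hleast.csInf_eq.symm, hhalf⟩
end
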